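/- Suppose the Orlicz integrand $\varphi$ satisfies the $\Delta_2$-condition: for every set $A$ that is a countable union of atoms and a $\sigma$-finite set, and every separable $S \subset X$, there exist $k \ge 1$ and $f \in L_1(\mu)$ with $\varphi(\omega, 2x) \le k\varphi(\omega, x) + f(\omega)$ for all $x \in S$ and a.e. $\omega \in A$. Then $\dom I_\varphi$ is linear, and consequently $L_\varphi(\mu) = C_\varphi^\sigma(\mu)$. -/

import Mathlib

open MeasureTheory Filter Topology ENNReal

/-- An Orlicz integrand `φ : Ω × X → [0,∞]`: for a.e. `ω` the partial map `φ ω` is an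
Orlicz function (even, convex, lsc, proper, vanishing continuously at the origin and
tending to `∞` at infinity), and `φ` is measurable in the sense that its composition
with any strongly measurable function is measurable. -/
structure IsOrliczIntegrand {Ω X : Type*} [MeasurableSpace Ω]
    [NormedAddCommGroup X] [NormedSpace ℝ X]
    (μ : Measure Ω) (φ : Ω → X → ℝ≥0∞) : Prop where
  ae_even : ∀ᵐ ω ∂μ, ∀ x : X, φ ω (-x) = φ ω x
  ae_convex : ∀ᵐ ω ∂μ, ∀ x y : X, ∀ a b : ℝ, 0 ≤ a → 0 ≤ b → a + b = 1 →
    φ ω (a • x + b • y) ≤ ENNReal.ofReal a * φ ω x + ENNReal.ofReal b * φ ω y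
  ae_lsc : ∀ᵐ ω ∂μ, LowerSemicontinuous (φ ω)
  ae_proper : ∀ᵐ ω ∂μ, ∃ x, φ ω x ≠ ⊤
  ae_zero : ∀ᵐ ω ∂μ, Tendsto (φ ω) (nhds 0) (nhds 0)
  ae_coercive : ∀ᵐ ω ∂μ, Tendsto (φ ω) (Filter.comap norm Filter.atTop) (nhds ⊤)
  meas_comp : ∀ u : Ω → X, StronglyMeasurable u → Measurable fun ω => φ ω (u ω)

/-- The Orlicz modular `I_φ(u) = ∫ φ(ω, u(ω)) dμ(ω)`. -/
noncomputable def orliczModular {Ω X : Type*} [MeasurableSpace Ω]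
    (μ : Measure Ω) (φ : Ω → X → ℝ≥0∞) (u : Ω → X) : ℝ≥0∞ :=
  ∫⁻ ω, φ ω (u ω) ∂μ

/-- The Luxemburg norm `‖u‖_φ = inf {α > 0 : I_φ(u/α) ≤ 1}`. -/
noncomputable def luxNorm {Ω X : Type*} [MeasurableSpace Ω]
    [NormedAddCommGroup X] [NormedSpace ℝ X]
    (μ : Measure Ω) (φ : Ω → X → ℝ≥0∞) (u : Ω → X) : ℝ≥0∞ :=
  ⨅ a : {a : ℝ // 0 < a ∧ orliczModular μ φ (fun ω => a⁻¹ • u ω) ≤ 1},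
    ENNReal.ofReal a

/-- Membership in the Orlicz space `L_φ(μ)`: strongly measurable with finite
Luxemburg norm. -/
def MemOrlicz {Ω X : Type*} [MeasurableSpace Ω]
    [NormedAddCommGroup X] [NormedSpace ℝ X]
    (μ : Measure Ω) (φ : Ω → X → ℝ≥0∞) (u : Ω → X) : Prop :=
  StronglyMeasurable u ∧ luxNorm μ φ u < ⊤

/-- The Amemiya norm `⦀u⦀_φ = inf_{α>0} α⁻¹ (1 + I_φ(α u))`. -/
noncomputable def amemiyaNorm {Ω X : Type*} [MeasurableSpace Ω]
    [NormedAddCommGroup X] [NormedSpace ℝ X]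
    (μ : Measure Ω) (φ : Ω → X → ℝ≥0∞) (u : Ω → X) : ℝ≥0∞ :=
  ⨅ a : {a : ℝ // 0 < a},
    ENNReal.ofReal (a : ℝ)⁻¹ * (1 + orliczModular μ φ (fun ω => (a : ℝ) • u ω))

/-- A function is σ-finitely concentrated if it vanishes (a.e.) outside a σ-finite
measurable set. -/
def SigmaFiniteConc {Ω X : Type*} [MeasurableSpace Ω] [Zero X]
    (μ : MeasureTheory.Measure Ω) (u : Ω → X) : Prop :=
  ∃ S : Set Ω, MeasurableSet S ∧
    (∃ g : ℕ → Set Ω, S = ⋃ n, g n ∧ ∀ n, MeasurableSet (g n) ∧ μ (g n) < ⊤) ∧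
    ∀ᵐ ω ∂μ, ω ∉ S → u ω = 0

/-- `u` has absolutely continuous norm: `‖u χ_{E_n}‖_φ → 0` for every sequence of
measurable sets with `χ_{E_n} → 0` a.e. -/
def AbsContNorm {Ω X : Type*} [MeasurableSpace Ω]
    [NormedAddCommGroup X] [NormedSpace ℝ X]
    (μ : MeasureTheory.Measure Ω) (φ : Ω → X → ℝ≥0∞) (u : Ω → X) : Prop :=
  ∀ E : ℕ → Set Ω, (∀ n, MeasurableSet (E n)) →
    (∀ᵐ ω ∂μ, ∀ᶠ n in Filter.atTop, ω ∉ E n) →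
    Filter.Tendsto (fun n => luxNorm μ φ ((E n).indicator u)) Filter.atTop (nhds 0)

/-- A μ-atom: a measurable set of positive measure whose measurable subsets have
measure `0` or full measure. -/
def IsMuAtom {Ω : Type*} [MeasurableSpace Ω] (μ : MeasureTheory.Measure Ω)
    (A : Set Ω) : Prop :=
  MeasurableSet A ∧ 0 < μ A ∧ ∀ B ⊆ A, MeasurableSet B → μ B = 0 ∨ μ B = μ A

/-- A set that is a countable union of μ-atoms and sets of finite measure
(i.e. a union of countably many atoms and a σ-finite set). -/
def MemAaSigma {Ω : Type*} [MeasurableSpace Ω] (μ : MeasureTheory.Measure Ω)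
    (A : Set Ω) : Prop :=
  ∃ g : ℕ → Set Ω, A = ⋃ n, g n ∧
    ∀ n, MeasurableSet (g n) ∧ (μ (g n) < ⊤ ∨ IsMuAtom μ (g n))

/-!
Linearity of `dom I_φ` reduces to `I_φ(u) < ⊤ → I_φ(2u) < ⊤`: convexity handles sums via
`u + v = 2 • (u/2 + v/2)`, and `φ ω (c • x) ≤ φ ω x` for `|c| ≤ 1` handles scalars. To apply `Δ₂`
to `u` we need a set of class `MemAaSigma` outside which `u` vanishes. Coercivity gives every
point with `u ω ≠ 0` a first dyadic scale `j` with `φ ω (2 ^ j • u ω) > 0`. For `j = 0` the level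
sets of `φ ω (u ω)` have finite measure by Markov's inequality; for `j = i + 1` the `Δ₂`-bound at
`x = 2 ^ i • u ω`, where `φ` vanishes, dominates `φ ω (2 ^ j • u ω)` by an integrable function.
Either way every `MemAaSigma` subset of a level set has finite measure, and an exhaustion
argument extends this to the level set itself.
-/

section MeasureExhaustion

open Set

variable {Ω : Type*} [MeasurableSpace Ω] {μ : Measure Ω}

lemma MemAaSigma.measurableSet {A : Set Ω} (h : MemAaSigma μ A) : MeasurableSet A := by
  obtain ⟨g, rfl, hg⟩ := h
  exact .iUnion fun n => (hg n).1

lemma memAaSigma_of_measurableSet {A : Set Ω} (hA : MeasurableSet A)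
    (h : μ A < ⊤ ∨ IsMuAtom μ A) : MemAaSigma μ A :=
  ⟨fun _ => A, (iUnion_const A).symm, fun _ => ⟨hA, h⟩⟩

lemma MemAaSigma.iUnion {A : ℕ → Set Ω} (h : ∀ n, MemAaSigma μ (A n)) :
    MemAaSigma μ (⋃ n, A n) := by
  choose g hg hgm using h
  refine ⟨fun k => g k.unpair.1 k.unpair.2, ?_, fun k => hgm _ _⟩
  rw [iUnion_unpair g]
  exact iUnion_congr hg

lemma MemAaSigma.union {A B : Set Ω} (hA : MemAaSigma μ A) (hB : MemAaSigma μ B) :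
    MemAaSigma μ (A ∪ B) := by
  have h := MemAaSigma.iUnion (A := fun n => Nat.rec A (fun _ _ => B) n)
    fun n => n.rec hA fun _ _ => hB
  rwa [← union_iUnion_nat_succ, iUnion_const] at h

/-- Exhaustion: a maximal `T ⊆ B` of class `MemAaSigma` leaves a remainder `B \ T` all of whose
measurable subsets have measure `0` or `⊤`, so the remainder is null or an atom. -/
lemma measure_lt_top_of_forall_memAaSigma {B : Set Ω} (hB : MeasurableSet B)
    (h : ∀ A ⊆ B, MemAaSigma μ A → μ A < ⊤) : μ B < ⊤ := by
  set 𝒞 := {A | A ⊆ B ∧ MemAaSigma μ A}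
  have hempty : ∅ ∈ 𝒞 := ⟨empty_subset B, memAaSigma_of_measurableSet .empty (by simp)⟩
  obtain ⟨v, -, hv, hv𝒞⟩ :=
    exists_seq_tendsto_sSup (S := μ '' 𝒞) ⟨_, ∅, hempty, rfl⟩ (OrderTop.bddAbove _)
  choose E hE hEv using hv𝒞
  set T := ⋃ n, E n
  have hT : T ∈ 𝒞 := ⟨iUnion_subset fun n => (hE n).1, .iUnion fun n => (hE n).2⟩
  have hTmax : μ T = sSup (μ '' 𝒞) := le_antisymm (le_sSup ⟨T, hT, rfl⟩)
    (le_of_tendsto' hv fun n => hEv n ▸ measure_mono (subset_iUnion E n))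
  have hnull : ∀ F ⊆ B \ T, MemAaSigma μ F → μ F = 0 := by
    intro F hF hFσ
    have hle : μ T + μ F ≤ μ T + 0 := by
      rw [add_zero, ← measure_union (disjoint_sdiff_right.mono_right hF) hFσ.measurableSet]
      exact hTmax ▸ le_sSup ⟨_, ⟨union_subset hT.1 (hF.trans sdiff_subset), hT.2.union hFσ⟩, rfl⟩
    exact le_antisymm ((ENNReal.add_le_add_iff_left (h T hT.1 hT.2).ne).1 hle) zero_le
  have hR : MeasurableSet (B \ T) := hB.diff hT.2.measurableSet
  have hR0 : μ (B \ T) = 0 := by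
    by_contra hR0
    have hRtop : μ (B \ T) = ⊤ := by
      by_contra hne
      exact hR0 (hnull _ subset_rfl
        (memAaSigma_of_measurableSet hR (.inl (lt_top_iff_ne_top.2 hne))))
    refine hR0 (hnull _ subset_rfl (memAaSigma_of_measurableSet hR (.inr
      ⟨hR, pos_iff_ne_zero.2 hR0, fun F hF hFm => ?_⟩)))
    rcases eq_top_or_lt_top (μ F) with hF' | hF'
    · exact .inr (hF'.trans hRtop.symm)
    · exact .inl (hnull F hF (memAaSigma_of_measurableSet hFm (.inl hF')))
  calc μ B ≤ μ (B ∩ T) + μ (B \ T) := measure_le_inter_add_sdiff μ B T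
    _ < ⊤ := by
      rw [hR0, add_zero]
      exact (measure_mono inter_subset_right).trans_lt (h T hT.1 hT.2)

lemma measure_lt_top_of_forall_memAaSigma_le {B : Set Ω} (hB : MeasurableSet B)
    {c : ℝ≥0∞} (hc : c ≠ 0)
    (h : ∀ A ⊆ B, MemAaSigma μ A →
      ∃ f : Ω → ℝ≥0∞, ∫⁻ ω, f ω ∂μ < ⊤ ∧ ∀ᵐ ω ∂μ, ω ∈ A → c ≤ f ω) :
    μ B < ⊤ := by
  refine measure_lt_top_of_forall_memAaSigma hB fun A hA hAσ => ?_
  obtain ⟨f, hfi, hcf⟩ := h A hA hAσ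
  have hmarkov : c * μ A ≤ ∫⁻ ω, f ω ∂μ := by
    rw [← lintegral_indicator_const hAσ.measurableSet]
    refine lintegral_mono_ae (hcf.mono fun ω hω => ?_)
    by_cases hωA : ω ∈ A
    · simpa [hωA] using hω hωA
    · simp [hωA]
  exact ENNReal.lt_top_of_mul_ne_top_right (hmarkov.trans_lt hfi).ne hc

end MeasureExhaustion

section Orlicz

open Set

variable {Ω X : Type*} [MeasurableSpace Ω] [NormedAddCommGroup X] [NormedSpace ℝ X]
  {μ : Measure Ω} {φ : Ω → X → ℝ≥0∞}

def DeltaTwo (μ : Measure Ω) (φ : Ω → X → ℝ≥0∞) : Prop :=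
  ∀ A : Set Ω, MemAaSigma μ A → ∀ S : Set X, TopologicalSpace.IsSeparable S →
    ∃ (k : ℝ) (f : Ω → ℝ≥0∞), 1 ≤ k ∧ Measurable f ∧ (∫⁻ ω, f ω ∂μ) < ⊤ ∧
      ∀ᵐ ω ∂μ, ω ∈ A → ∀ x ∈ S, φ ω ((2 : ℝ) • x) ≤ ENNReal.ofReal k * φ ω x + f ω

namespace IsOrliczIntegrand

lemma ae_apply_zero (hφ : IsOrliczIntegrand μ φ) : ∀ᵐ ω ∂μ, φ ω 0 = 0 := by
  filter_upwards [hφ.ae_zero] with ω hω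
  exact tendsto_nhds_unique (tendsto_pure_nhds _ _) (hω.mono_left (pure_le_nhds 0))

lemma ae_apply_smul_le (hφ : IsOrliczIntegrand μ φ) :
    ∀ᵐ ω ∂μ, ∀ (c : ℝ) (x : X), |c| ≤ 1 → φ ω (c • x) ≤ φ ω x := by
  filter_upwards [hφ.ae_even, hφ.ae_convex, hφ.ae_apply_zero] with ω heven hconv hzero c x hc
  have hnonneg : ∀ t : ℝ, 0 ≤ t → t ≤ 1 → φ ω (t • x) ≤ φ ω x := fun t ht0 ht1 => by
    have h := hconv x 0 t (1 - t) ht0 (by linarith) (by ring)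
    rw [smul_zero, add_zero, hzero, mul_zero, add_zero] at h
    exact h.trans (mul_le_of_le_one_left zero_le (ENNReal.ofReal_le_one.2 ht1))
  rcases le_or_gt 0 c with hc0 | hc0
  · exact hnonneg c hc0 ((le_abs_self c).trans hc)
  · rw [← neg_neg c, neg_smul, heven]
    exact hnonneg (-c) (by linarith) ((neg_le_abs c).trans hc)

end IsOrliczIntegrand

def firstPositiveScaleSet (φ : Ω → X → ℝ≥0∞) (u : Ω → X) (j n : ℕ) : Set Ω :=
  {ω | (n : ℝ≥0∞)⁻¹ ≤ φ ω ((2 : ℝ) ^ j • u ω) ∧ ∀ i < j, φ ω ((2 : ℝ) ^ i • u ω) = 0}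

lemma measurableSet_firstPositiveScaleSet (hφ : IsOrliczIntegrand μ φ) {u : Ω → X}
    (hu : StronglyMeasurable u) (j n : ℕ) :
    MeasurableSet (firstPositiveScaleSet φ u j n) := by
  have hmeas : ∀ i : ℕ, Measurable fun ω => φ ω ((2 : ℝ) ^ i • u ω) :=
    fun i => hφ.meas_comp _ (hu.const_smul _)
  simp only [firstPositiveScaleSet, ofPred_and, ofPred_forall]
  exact (measurableSet_le measurable_const (hmeas j)).inter
    (.iInter fun i => .iInter fun _ => hmeas i (measurableSet_singleton 0))

lemma ae_exists_mem_firstPositiveScaleSet (hφ : IsOrliczIntegrand μ φ) (u : Ω → X) :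
    ∀ᵐ ω ∂μ, u ω ≠ 0 → ∃ j n, ω ∈ firstPositiveScaleSet φ u j n := by
  classical
  filter_upwards [hφ.ae_coercive] with ω hω hu0
  have hnorm : Tendsto (fun j : ℕ => ‖(2 : ℝ) ^ j • u ω‖) atTop atTop := by
    simp only [norm_smul, norm_pow, Real.norm_ofNat]
    exact (tendsto_pow_atTop_atTop_of_one_lt (one_lt_two (α := ℝ))).atTop_mul_const
      (norm_pos_iff.2 hu0)
  have hpos : ∃ j : ℕ, φ ω ((2 : ℝ) ^ j • u ω) ≠ 0 :=
    ((hω.comp (tendsto_comap_iff.2 hnorm)).eventually_ne top_ne_zero).exists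
  obtain ⟨n, hn⟩ := ENNReal.exists_inv_nat_lt (Nat.find_spec hpos)
  exact ⟨Nat.find hpos, n, hn.le, fun i hi => not_not.1 (Nat.find_min hpos hi)⟩

lemma measure_firstPositiveScaleSet_lt_top (hφ : IsOrliczIntegrand μ φ) (hΔ2 : DeltaTwo μ φ)
    {u : Ω → X} (hu : StronglyMeasurable u) (hM : orliczModular μ φ u < ⊤) (j n : ℕ) :
    μ (firstPositiveScaleSet φ u j n) < ⊤ := by
  refine measure_lt_top_of_forall_memAaSigma_le (measurableSet_firstPositiveScaleSet hφ hu j n)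
    (ENNReal.inv_ne_zero.2 (natCast_ne_top n)) fun A hA hAσ => ?_
  cases j with
  | zero => exact ⟨fun ω => φ ω (u ω), hM, ae_of_all _ fun ω hω => by simpa using (hA hω).1⟩
  | succ i =>
    obtain ⟨k, f, -, -, hfi, hf⟩ :=
      hΔ2 A hAσ (range fun ω => (2 : ℝ) ^ i • u ω) (hu.const_smul _).isSeparable_range
    refine ⟨f, hfi, ?_⟩
    filter_upwards [hf] with ω hω hωA
    obtain ⟨hlevel, hzero⟩ := hA hωA
    calc (n : ℝ≥0∞)⁻¹ ≤ φ ω ((2 : ℝ) ^ (i + 1) • u ω) := hlevel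
      _ = φ ω ((2 : ℝ) • (2 : ℝ) ^ i • u ω) := by rw [smul_smul, pow_succ']
      _ ≤ ENNReal.ofReal k * φ ω ((2 : ℝ) ^ i • u ω) + f ω := hω hωA _ (mem_range_self ω)
      _ = f ω := by rw [hzero i i.lt_succ_self, mul_zero, zero_add]

theorem sigmaFiniteConc_of_orliczModular_lt_top (hφ : IsOrliczIntegrand μ φ)
    (hΔ2 : DeltaTwo μ φ) {u : Ω → X} (hu : StronglyMeasurable u)
    (hM : orliczModular μ φ u < ⊤) : SigmaFiniteConc μ u := by
  set L : ℕ → Set Ω := fun k => firstPositiveScaleSet φ u k.unpair.1 k.unpair.2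
  refine ⟨⋃ k, L k, .iUnion fun k => measurableSet_firstPositiveScaleSet hφ hu _ _,
    ⟨L, rfl, fun k => ⟨measurableSet_firstPositiveScaleSet hφ hu _ _,
      measure_firstPositiveScaleSet_lt_top hφ hΔ2 hu hM _ _⟩⟩, ?_⟩
  filter_upwards [ae_exists_mem_firstPositiveScaleSet hφ u] with ω hω
  contrapose!
  intro hu0
  obtain ⟨j, n, h⟩ := hω hu0
  exact mem_iUnion.2 ⟨Nat.pair j n, by simpa [L] using h⟩

theorem orliczModular_two_smul_lt_top (hφ : IsOrliczIntegrand μ φ) (hΔ2 : DeltaTwo μ φ)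
    {u : Ω → X} (hu : StronglyMeasurable u) (hM : orliczModular μ φ u < ⊤) :
    orliczModular μ φ (fun ω => (2 : ℝ) • u ω) < ⊤ := by
  obtain ⟨S, -, ⟨g, rfl, hg⟩, hS⟩ := sigmaFiniteConc_of_orliczModular_lt_top hφ hΔ2 hu hM
  obtain ⟨k, f, -, -, hfi, hk⟩ := hΔ2 _ ⟨g, rfl, fun n => ⟨(hg n).1, .inl (hg n).2⟩⟩
    (range u) hu.isSeparable_range
  have hbound : ∀ᵐ ω ∂μ, φ ω ((2 : ℝ) • u ω) ≤ ENNReal.ofReal k * φ ω (u ω) + f ω := by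
    filter_upwards [hk, hS, hφ.ae_apply_zero] with ω hωk hωS hω0
    by_cases hω : ω ∈ ⋃ n, g n
    · exact hωk hω _ (mem_range_self ω)
    · simp [hωS hω, hω0]
  have hmeas := hφ.meas_comp u hu
  calc orliczModular μ φ (fun ω => (2 : ℝ) • u ω)
      ≤ ∫⁻ ω, ENNReal.ofReal k * φ ω (u ω) + f ω ∂μ := lintegral_mono_ae hbound
    _ = ENNReal.ofReal k * orliczModular μ φ u + ∫⁻ ω, f ω ∂μ := by
      rw [lintegral_add_left (hmeas.const_mul _), lintegral_const_mul _ hmeas, orliczModular]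
    _ < ⊤ := ENNReal.add_lt_top.2 ⟨ENNReal.mul_lt_top ENNReal.ofReal_lt_top hM, hfi⟩

theorem orliczModular_two_pow_smul_lt_top (hφ : IsOrliczIntegrand μ φ) (hΔ2 : DeltaTwo μ φ)
    {u : Ω → X} (hu : StronglyMeasurable u) (hM : orliczModular μ φ u < ⊤) (m : ℕ) :
    orliczModular μ φ (fun ω => (2 : ℝ) ^ m • u ω) < ⊤ := by
  induction m with
  | zero => simpa using hM
  | succ m ih =>
    simpa only [pow_succ', mul_smul] using
      orliczModular_two_smul_lt_top hφ hΔ2 (u := fun ω => (2 : ℝ) ^ m • u ω) (hu.const_smul _) ih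

theorem orliczModular_smul_lt_top (hφ : IsOrliczIntegrand μ φ) (hΔ2 : DeltaTwo μ φ)
    {u : Ω → X} (hu : StronglyMeasurable u) (hM : orliczModular μ φ u < ⊤) (c : ℝ) :
    orliczModular μ φ (fun ω => c • u ω) < ⊤ := by
  obtain ⟨m, hm⟩ := pow_unbounded_of_one_lt |c| (one_lt_two (α := ℝ))
  have h2m : (0 : ℝ) < 2 ^ m := by positivity
  refine lt_of_le_of_lt (lintegral_mono_ae ?_) (orliczModular_two_pow_smul_lt_top hφ hΔ2 hu hM m)
  filter_upwards [hφ.ae_apply_smul_le] with ω h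
  have hc : |c / 2 ^ m| ≤ 1 := by
    rw [abs_div, abs_of_pos h2m, div_le_one h2m]
    exact hm.le
  simpa only [smul_smul, div_mul_cancel₀ c h2m.ne'] using h _ ((2 : ℝ) ^ m • u ω) hc

theorem orliczModular_add_lt_top (hφ : IsOrliczIntegrand μ φ) (hΔ2 : DeltaTwo μ φ)
    {u v : Ω → X} (hu : StronglyMeasurable u) (hv : StronglyMeasurable v)
    (hMu : orliczModular μ φ u < ⊤) (hMv : orliczModular μ φ v < ⊤) :
    orliczModular μ φ (u + v) < ⊤ := by
  set w := fun ω => (2⁻¹ : ℝ) • u ω + (2⁻¹ : ℝ) • v ω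
  have hmu := hφ.meas_comp u hu
  have hmv := hφ.meas_comp v hv
  have hMw : orliczModular μ φ w < ⊤ := by
    have hconv : ∀ᵐ ω ∂μ, φ ω (w ω) ≤
        ENNReal.ofReal 2⁻¹ * φ ω (u ω) + ENNReal.ofReal 2⁻¹ * φ ω (v ω) := by
      filter_upwards [hφ.ae_convex] with ω h
      exact h (u ω) (v ω) 2⁻¹ 2⁻¹ (by norm_num) (by norm_num) (by norm_num)
    calc orliczModular μ φ w
        ≤ ∫⁻ ω, ENNReal.ofReal 2⁻¹ * φ ω (u ω) + ENNReal.ofReal 2⁻¹ * φ ω (v ω) ∂μ :=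
          lintegral_mono_ae hconv
      _ = ENNReal.ofReal 2⁻¹ * orliczModular μ φ u
          + ENNReal.ofReal 2⁻¹ * orliczModular μ φ v := by
        rw [lintegral_add_left (hmu.const_mul _), lintegral_const_mul _ hmu,
          lintegral_const_mul _ hmv, orliczModular, orliczModular]
      _ < ⊤ := ENNReal.add_lt_top.2 ⟨ENNReal.mul_lt_top ENNReal.ofReal_lt_top hMu,
          ENNReal.mul_lt_top ENNReal.ofReal_lt_top hMv⟩
  have h2w : (fun ω => (2 : ℝ) • w ω) = u + v := by
    ext ω
    simp [w, smul_add, smul_smul]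
  simpa only [h2w] using
    orliczModular_two_smul_lt_top hφ hΔ2 (u := w) ((hu.const_smul _).add (hv.const_smul _)) hMw

lemma tendsto_orliczModular_indicator (hφ : IsOrliczIntegrand μ φ) {u : Ω → X}
    (hu : StronglyMeasurable u) (hM : orliczModular μ φ u < ⊤) {E : ℕ → Set Ω}
    (hE : ∀ n, MeasurableSet (E n)) (hEae : ∀ᵐ ω ∂μ, ∀ᶠ n in atTop, ω ∉ E n) :
    Tendsto (fun n => orliczModular μ φ ((E n).indicator u)) atTop (𝓝 0) := by
  have hlim := tendsto_lintegral_of_dominated_convergence (f := fun _ => 0) (fun ω => φ ω (u ω))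
    (fun n => hφ.meas_comp _ (hu.indicator (hE n)))
    (fun n => hφ.ae_apply_zero.mono fun ω hω0 => by
      by_cases hω : ω ∈ E n <;> simp [hω, hω0])
    hM.ne
    (by
      filter_upwards [hEae, hφ.ae_apply_zero] with ω hω hω0
      exact tendsto_const_nhds.congr' (hω.mono fun n hn => by simp [hn, hω0]))
  simpa only [orliczModular, lintegral_zero] using hlim

lemma exists_orliczModular_inv_smul_le_one_of_luxNorm_lt_top {u : Ω → X}
    (h : luxNorm μ φ u < ⊤) : ∃ a : ℝ, 0 < a ∧ orliczModular μ φ (fun ω => a⁻¹ • u ω) ≤ 1 :=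
  let ⟨⟨a, ha⟩, _⟩ := iInf_lt_iff.1 h
  ⟨a, ha⟩

theorem MemOrlicz.sigmaFiniteConc (hφ : IsOrliczIntegrand μ φ) (hΔ2 : DeltaTwo μ φ)
    {u : Ω → X} (hu : MemOrlicz μ φ u) : SigmaFiniteConc μ u := by
  obtain ⟨a, ha, hIa⟩ := exists_orliczModular_inv_smul_le_one_of_luxNorm_lt_top hu.2
  obtain ⟨S, hS, hg, hSae⟩ := sigmaFiniteConc_of_orliczModular_lt_top hφ hΔ2
    (hu.1.const_smul a⁻¹) (hIa.trans_lt one_lt_top)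
  exact ⟨S, hS, hg, hSae.mono fun ω h hω => by simpa [ha.ne'] using h hω⟩

/-- By `Δ₂`, `I_φ(r⁻¹ u) < ⊤` for every `r > 0`, so dominated convergence gives
`I_φ(r⁻¹ 1_{E n} u) ≤ 1` eventually. -/
theorem MemOrlicz.absContNorm (hφ : IsOrliczIntegrand μ φ) (hΔ2 : DeltaTwo μ φ)
    {u : Ω → X} (hu : MemOrlicz μ φ u) : AbsContNorm μ φ u := by
  obtain ⟨a, ha, hIa⟩ := exists_orliczModular_inv_smul_le_one_of_luxNorm_lt_top hu.2
  intro E hE hEae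
  refine ENNReal.tendsto_nhds_zero.2 fun ε hε => ?_
  obtain ⟨r, -, hr0, hrε⟩ := ENNReal.lt_iff_exists_real_btwn.1 hε
  have hr : 0 < r := ENNReal.ofReal_pos.1 hr0
  have hMr : orliczModular μ φ (fun ω => r⁻¹ • u ω) < ⊤ := by
    simpa [smul_smul, mul_assoc, ha.ne'] using orliczModular_smul_lt_top hφ hΔ2
      (hu.1.const_smul a⁻¹) (hIa.trans_lt one_lt_top) (r⁻¹ * a)
  have hlim := tendsto_orliczModular_indicator hφ (u := fun ω => r⁻¹ • u ω)
    (hu.1.const_smul r⁻¹) hMr hE hEae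
  filter_upwards [hlim.eventually (eventually_le_nhds one_pos)] with n hn
  refine (iInf_le_of_le ⟨r, hr, ?_⟩ le_rfl).trans hrε.le
  simpa only [indicator_const_smul] using hn

end Orlicz

/-- If the Orlicz integrand `φ` satisfies the `Δ₂`-condition, then
`dom I_φ` is linear, and consequently `L_φ(μ) = C_φ^σ(μ)`. -/
theorem delta2_implies_linear_domain {Ω X : Type*} [MeasurableSpace Ω]
    [NormedAddCommGroup X] [NormedSpace ℝ X]
    (μ : Measure Ω) (φ : Ω → X → ℝ≥0∞) (hφ : IsOrliczIntegrand μ φ)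
    (hΔ2 : ∀ A : Set Ω, MemAaSigma μ A → ∀ S : Set X, TopologicalSpace.IsSeparable S →
      ∃ (k : ℝ) (f : Ω → ℝ≥0∞), 1 ≤ k ∧ Measurable f ∧ (∫⁻ ω, f ω ∂μ) < ⊤ ∧
        ∀ᵐ ω ∂μ, ω ∈ A → ∀ x ∈ S,
          φ ω ((2 : ℝ) • x) ≤ ENNReal.ofReal k * φ ω x + f ω) :
    (∀ u v : Ω → X,
      MemOrlicz μ φ u ∧ orliczModular μ φ u < ⊤ →
      MemOrlicz μ φ v ∧ orliczModular μ φ v < ⊤ →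
      orliczModular μ φ (u + v) < ⊤) ∧
    (∀ (c : ℝ) (u : Ω → X),
      MemOrlicz μ φ u ∧ orliczModular μ φ u < ⊤ →
      orliczModular μ φ (c • u) < ⊤) ∧
    (∀ u : Ω → X, MemOrlicz μ φ u → AbsContNorm μ φ u ∧ SigmaFiniteConc μ u) :=
  ⟨fun _ _ ⟨⟨hu, _⟩, hMu⟩ ⟨⟨hv, _⟩, hMv⟩ => orliczModular_add_lt_top hφ hΔ2 hu hv hMu hMv,
    fun c _ ⟨⟨hu, _⟩, hMu⟩ => orliczModular_smul_lt_top hφ hΔ2 hu hMu c,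
    fun _ hu => ⟨hu.absContNorm hφ hΔ2, hu.sigmaFiniteConc hφ hΔ2⟩⟩
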